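/- arXiv:2603.25922 — 13 statements merged into one kernel-verified Lean document; each statement's English description precedes it below -/
import Mathlib

section
/- For every k ∈ ℕ and all sufficiently large primes p, there exist k consecutive positive integers all of which are quadratic residues modulo p. -/
open Combinatorics

/-- A bounded, finitary version of van der Waerden's theorem, derived directly from
the Hales–Jewett theorem: there is a bound `N` (depending only on the length `K` and
the set of colors) such that every coloring of `ℕ` admits a monochromatic arithmetic
progression `x, x+d, ..., x+K*d` with `0 < d ≤ N` and `x + K*d ≤ N`. -/
lemma bounded_vdw (K : ℕ) (κ : Type) [Finite κ] :
    ∃ N : ℕ, ∀ C : ℕ → κ, ∃ x d c, 0 < d ∧ d ≤ N ∧ x + K * d ≤ N ∧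
      ∀ i ≤ K, C (x + i * d) = c := by
  classical
  obtain ⟨ι, _inst, hι⟩ := Line.exists_mono_in_high_dimension (Fin (K + 1)) κ
  refine ⟨Fintype.card ι * (K + 1), fun C => ?_⟩
  obtain ⟨l, c, hl⟩ := hι fun v => C (∑ i, (v i : ℕ))
  set s : Finset ι := Finset.univ.filter (fun i => l.idxFun i = none) with hs
  set b : ℕ := ∑ i ∈ sᶜ, ((l.idxFun i).map Fin.val).getD 0 with hb
  have hcard : 0 < s.card := Finset.card_pos.mpr ⟨l.proper.choose, by
    rw [hs, Finset.mem_filter]; exact ⟨Finset.mem_univ _, l.proper.choose_spec⟩⟩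
  have hsle : s.card ≤ Fintype.card ι := by
    simpa using Finset.card_le_univ s
  have hcompl : s.card + sᶜ.card = Fintype.card ι := Finset.card_add_card_compl s
  have hble : b ≤ sᶜ.card * K := by
    rw [hb]
    calc ∑ i ∈ sᶜ, ((l.idxFun i).map Fin.val).getD 0 ≤ ∑ _i ∈ sᶜ, K := by
          apply Finset.sum_le_sum
          intro i _
          cases h : l.idxFun i with
          | none => simp
          | some y => simpa [h] using Fin.is_le y
      _ = sᶜ.card * K := by rw [Finset.sum_const, smul_eq_mul]
  refine ⟨b, s.card, c, hcard, ?_, ?_, ?_⟩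
  · exact hsle.trans (Nat.le_mul_of_pos_right _ (Nat.succ_pos K))
  · nlinarith [hcompl, hble, hsle]
  · intro i hi
    have h2 := hl ⟨i, Nat.lt_succ_of_le hi⟩
    have h3 : (∑ j, ((l ⟨i, Nat.lt_succ_of_le hi⟩ : ι → Fin (K + 1)) j : ℕ))
        = b + i * s.card := by
      rw [← Finset.sum_add_sum_compl s]
      have e1 : ∑ j ∈ s, ((l ⟨i, Nat.lt_succ_of_le hi⟩ : ι → Fin (K + 1)) j : ℕ)
          = s.card * i := by
        rw [Finset.sum_congr rfl (fun j hj => ?_), Finset.sum_const, smul_eq_mul]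
        rw [hs, Finset.mem_filter] at hj
        rw [l.apply_none _ _ hj.2]
      have e2 : ∑ j ∈ sᶜ, ((l ⟨i, Nat.lt_succ_of_le hi⟩ : ι → Fin (K + 1)) j : ℕ) = b := by
        rw [hb]
        apply Finset.sum_congr rfl
        intro j hj
        rw [hs, Finset.compl_filter, Finset.mem_filter] at hj
        obtain ⟨y, hy⟩ := Option.ne_none_iff_exists.mp hj.2
        simp [Line.coe_apply, ← hy]
      rw [e1, e2]
      ring
    rw [← h3]
    exact h2

/-- If two nonzero elements of a finite field are both squares or both nonsquares,
their quadratic characters agree. -/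
lemma quadChar_eq_of_isSquare_iff {F : Type*} [Field F] [Fintype F] [DecidableEq F]
    {a b : F} (ha : a ≠ 0) (hb : b ≠ 0) (h : IsSquare a ↔ IsSquare b) :
    quadraticChar F a = quadraticChar F b := by
  rcases quadraticChar_dichotomy ha with h1 | h1 <;>
    rcases quadraticChar_dichotomy hb with h2 | h2 <;> rw [h1, h2]
  · exfalso
    have := (quadraticChar_one_iff_isSquare ha).mp h1
    have h2' := h.mp this
    rw [← quadraticChar_one_iff_isSquare hb] at h2'
    omega
  · exfalso
    have := (quadraticChar_one_iff_isSquare hb).mp h2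
    have h1' := h.mpr this
    rw [← quadraticChar_one_iff_isSquare ha] at h1'
    omega

/-- Schur's conjecture on consecutive quadratic residues: for every `k` and all
sufficiently large primes `p`, there exist `k` consecutive positive integers all of
which are quadratic residues modulo `p` (i.e. congruent to a square and not divisible
by `p`). -/
theorem consecutive_quadratic_residues (k : ℕ) :
    ∃ P : ℕ, ∀ p : ℕ, p.Prime → P ≤ p →
      ∃ a : ℕ, 0 < a ∧ ∀ i < k,
        (∃ y : ℕ, (a + i) ≡ y ^ 2 [MOD p]) ∧ ¬ (p ∣ (a + i)) := by
  classical
  obtain ⟨N, hN⟩ := bounded_vdw (k * k) Bool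
  refine ⟨N + k + 2, fun p hp hPp => ?_⟩
  haveI : Fact p.Prime := ⟨hp⟩
  -- a helper to produce the two conclusions from a nonzero square in `ZMod p`
  have main : ∀ m : ℕ, ((m : ZMod p) ≠ 0) → IsSquare ((m : ZMod p)) →
      (∃ y : ℕ, m ≡ y ^ 2 [MOD p]) ∧ ¬ (p ∣ m) := by
    intro m hm hsq
    constructor
    · obtain ⟨y, hy⟩ := hsq
      refine ⟨y.val, (ZMod.natCast_eq_natCast_iff _ _ _).mp ?_⟩
      push_cast
      rw [ZMod.natCast_zmod_val, hy]
      ring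
    · intro hdvd
      exact hm ((ZMod.natCast_eq_zero_iff _ _).mpr hdvd)
  have hnz : ∀ m : ℕ, 0 < m → m ≤ N + 1 → ((m : ZMod p) ≠ 0) := by
    intro m hm0 hmN h0
    have := (ZMod.natCast_eq_zero_iff _ _).mp h0
    have := Nat.le_of_dvd hm0 this
    omega
  have hknz : ∀ m : ℕ, 0 < m → m ≤ k → ((m : ZMod p) ≠ 0) := by
    intro m hm0 hmN h0
    have := (ZMod.natCast_eq_zero_iff _ _).mp h0
    have := Nat.le_of_dvd hm0 this
    omega
  by_cases hA : ∀ j : ℕ, 0 < j → j ≤ k → IsSquare ((j : ZMod p))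
  · -- all of 1, ..., k are squares mod p
    refine ⟨1, one_pos, fun i hi => ?_⟩
    exact main (1 + i) (hknz _ (by omega) (by omega)) (hA _ (by omega) (by omega))
  · push_neg at hA
    obtain ⟨j₀, hj₀0, hj₀k, hj₀ns⟩ := hA
    have hk1 : 1 ≤ k := le_trans hj₀0 hj₀k
    obtain ⟨x, d, cc, hd0, hdN, hbound, hmono⟩ :=
      hN (fun n => decide (IsSquare ((n + 1 : ℕ) : ZMod p)))
    have hxN : x + 1 ≤ N + 1 := by nlinarith
    have helt : ∀ i, i ≤ k * k → ((x + i * d + 1 : ℕ) : ZMod p) ≠ 0 := by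
      intro i hi
      apply hnz _ (by omega)
      nlinarith
    have hBnz : ((x + 1 : ℕ) : ZMod p) ≠ 0 := by
      have h := helt 0 (by omega)
      rwa [show x + 0 * d + 1 = x + 1 from by omega] at h
    have hsame : ∀ i, i ≤ k * k →
        quadraticChar (ZMod p) ((x + i * d + 1 : ℕ) : ZMod p)
          = quadraticChar (ZMod p) ((x + 1 : ℕ) : ZMod p) := by
      intro i hi
      apply quadChar_eq_of_isSquare_iff (helt i hi) hBnz
      have e1 := hmono i hi
      have e2 := hmono 0 (by omega)
      rw [show x + 0 * d = x from by omega] at e2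
      rw [← decide_eq_decide, e1, e2]
    have hDnz : ((d : ℕ) : ZMod p) ≠ 0 := hnz d hd0 (by omega)
    have hj₀nz : ((j₀ : ℕ) : ZMod p) ≠ 0 := hknz _ hj₀0 hj₀k
    have hj₀χ : quadraticChar (ZMod p) ((j₀ : ℕ) : ZMod p) = -1 := by
      rcases quadraticChar_dichotomy hj₀nz with h1 | h1
      · exact absurd ((quadraticChar_one_iff_isSquare hj₀nz).mp h1) hj₀ns
      · exact h1
    obtain ⟨j, hj0, hjk, hjχ⟩ : ∃ j : ℕ, 0 < j ∧ j ≤ k ∧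
        quadraticChar (ZMod p) ((j * d : ℕ) : ZMod p)
          = quadraticChar (ZMod p) ((x + 1 : ℕ) : ZMod p) := by
      by_cases hcase : quadraticChar (ZMod p) ((d : ℕ) : ZMod p)
          = quadraticChar (ZMod p) ((x + 1 : ℕ) : ZMod p)
      · exact ⟨1, one_pos, hk1, by rw [one_mul]; exact hcase⟩
      · refine ⟨j₀, hj₀0, hj₀k, ?_⟩
        rw [Nat.cast_mul, map_mul, hj₀χ]
        rcases quadraticChar_dichotomy hDnz with h1 | h1 <;>
          rcases quadraticChar_dichotomy hBnz with h2 | h2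
        · exact absurd (h1.trans h2.symm) hcase
        · rw [h1, h2]; norm_num
        · rw [h1, h2]; norm_num
        · exact absurd (h1.trans h2.symm) hcase
    have hMnz : ((j * d : ℕ) : ZMod p) ≠ 0 := by
      intro h0
      rw [h0, quadraticChar_zero] at hjχ
      rcases quadraticChar_dichotomy hBnz with h2 | h2 <;> rw [h2] at hjχ <;> omega
    obtain ⟨u, hu⟩ : ∃ u : ZMod p,
        u = (((j * d : ℕ) : ZMod p))⁻¹ * ((x + 1 : ℕ) : ZMod p) := ⟨_, rfl⟩
    have hchar : ∀ i : ℕ, i < k → quadraticChar (ZMod p) (u + (i : ZMod p)) = 1 := by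
      intro i hik
      have hidx : i * j ≤ k * k := by nlinarith
      have hcast : ((x + (i * j) * d + 1 : ℕ) : ZMod p)
          = ((x + 1 : ℕ) : ZMod p) + (i : ZMod p) * ((j * d : ℕ) : ZMod p) := by
        push_cast
        ring
      have h1 := hsame (i * j) hidx
      rw [hcast] at h1
      have h2 : u + (i : ZMod p) = (((j * d : ℕ) : ZMod p))⁻¹ *
          (((x + 1 : ℕ) : ZMod p) + (i : ZMod p) * ((j * d : ℕ) : ZMod p)) := by
        rw [hu, mul_add, mul_comm ((i : ZMod p)) (((j * d : ℕ) : ZMod p)),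
          ← mul_assoc, inv_mul_cancel₀ hMnz, one_mul]
      rw [h2, map_mul, h1, ← hjχ, ← map_mul, inv_mul_cancel₀ hMnz, map_one]
    have hunz : ∀ i : ℕ, i < k → u + (i : ZMod p) ≠ 0 := by
      intro i hik h0
      have hc := hchar i hik
      rw [h0, quadraticChar_zero] at hc
      omega
    have husq : ∀ i : ℕ, i < k → IsSquare (u + (i : ZMod p)) := by
      intro i hik
      exact (quadraticChar_one_iff_isSquare (hunz i hik)).mp (hchar i hik)
    have huval : ((u.val : ℕ) : ZMod p) = u := ZMod.natCast_zmod_val u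
    refine ⟨u.val, ?_, fun i hik => ?_⟩
    · rcases Nat.eq_zero_or_pos u.val with h0 | h0
      · exfalso
        apply hunz 0 (by omega)
        rw [Nat.cast_zero, add_zero, ← huval, h0, Nat.cast_zero]
      · exact h0
    · have hcast : ((u.val + i : ℕ) : ZMod p) = u + (i : ZMod p) := by
        rw [Nat.cast_add, huval]
      refine main _ ?_ ?_
      · rw [hcast]; exact hunz i hik
      · rw [hcast]; exact husq i hik
end

section
/- For every r, k ∈ ℕ and all sufficiently large N, if {1,...,N} is colored with r colors, then some color class contains a k-term arithmetic progression {a, a+d, ..., a+(k-1)d} together with its common difference d (i.e., d also has that color). (Brauer–Schur theorem, assuming van der Waerden's theorem.) -/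
/-- Brauer–Schur theorem, assuming van der Waerden's theorem: for every `r`, `k` and all
sufficiently large `N`, any `r`-coloring of `{1,...,N}` admits a color class containing a
`k`-term arithmetic progression together with its common difference. -/
theorem brauer_schur
    (hvdW : ∀ r k : ℕ, ∃ W : ℕ, ∀ N : ℕ, W ≤ N → ∀ χ : ℕ → Fin r,
      ∃ a d : ℕ, 0 < a ∧ 0 < d ∧ (∀ i < k, a + i * d ≤ N) ∧
        ∀ i < k, χ (a + i * d) = χ a) :
    ∀ r k : ℕ, ∃ N₀ : ℕ, ∀ N : ℕ, N₀ ≤ N → ∀ χ : ℕ → Fin r,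
      ∃ a d : ℕ, 0 < a ∧ 0 < d ∧ d ≤ N ∧ (∀ i < k, a + i * d ≤ N) ∧
        ∀ i < k, χ (a + i * d) = χ d := by
  intro r k
  rcases Nat.eq_zero_or_pos k with hk | hk
  · subst hk
    exact ⟨1, fun N hN χ => ⟨1, 1, one_pos, one_pos, hN,
      fun i hi => absurd hi (Nat.not_lt_zero i),
      fun i hi => absurd hi (Nat.not_lt_zero i)⟩⟩
  induction r with
  | zero => exact ⟨1, fun N hN χ => (χ 1).elim0⟩
  | succ r IH =>
    obtain ⟨M₀, hM₀⟩ := IH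
    set M := max M₀ 1 with hMdef
    have hM1 : 1 ≤ M := le_max_right _ _
    obtain ⟨W, hW⟩ := hvdW (r + 1) (k * M + 1)
    refine ⟨W, fun N hN χ => ?_⟩
    obtain ⟨a, d, ha, hd, hbound, hmono⟩ := hW N hN χ
    set c := χ a with hc
    have hMd : M * d ≤ N := by
      have h1 : M ≤ k * M := Nat.le_mul_of_pos_left M hk
      have h2 : a + k * M * d ≤ N := hbound (k * M) (by omega)
      calc M * d ≤ k * M * d := Nat.mul_le_mul_right d h1
        _ ≤ a + k * M * d := Nat.le_add_left _ _
        _ ≤ N := h2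
    by_cases hcase : ∃ j, 1 ≤ j ∧ j ≤ M ∧ χ (j * d) = c
    · obtain ⟨j, hj1, hjM, hjc⟩ := hcase
      have hjd : 0 < j * d := Nat.mul_pos hj1 hd
      refine ⟨a, j * d, ha, hjd, ?_, ?_, ?_⟩
      · calc j * d ≤ M * d := Nat.mul_le_mul_right d hjM
          _ ≤ N := hMd
      · intro i hi
        have hij : i * j ≤ k * M := Nat.mul_le_mul (Nat.le_of_lt hi) hjM
        have := hbound (i * j) (by omega)
        calc a + i * (j * d) = a + i * j * d := by ring
          _ ≤ N := this
      · intro i hi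
        have hij : i * j ≤ k * M := Nat.mul_le_mul (Nat.le_of_lt hi) hjM
        have h1 : χ (a + i * j * d) = c := hmono (i * j) (by omega)
        have h2 : a + i * (j * d) = a + i * j * d := by ring
        rw [h2, h1, hjc]
    · push_neg at hcase
      -- every j ∈ [1, M] has χ (j * d) ≠ c
      obtain ⟨s, rfl⟩ : ∃ s, r = s + 1 := by
        rcases Nat.eq_zero_or_pos r with h0 | h0
        · exfalso
          subst h0
          have h1 := (χ (1 * d)).isLt
          have h2 := c.isLt
          exact hcase 1 le_rfl hM1 (Fin.ext (by omega))
        · exact ⟨r - 1, by omega⟩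
      set f : Fin (s + 2) → Fin (s + 1) := fun x =>
        ⟨if x.val < c.val then x.val else x.val - 1, by
          have h1 := x.isLt
          have h2 := c.isLt
          split <;> omega⟩ with hf
      have hfinj : ∀ x y : Fin (s + 2), x ≠ c → y ≠ c → f x = f y → x = y := by
        intro x y hx hy h
        have hx' : x.val ≠ c.val := fun h' => hx (Fin.ext h')
        have hy' : y.val ≠ c.val := fun h' => hy (Fin.ext h')
        have h' : (if x.val < c.val then x.val else x.val - 1) =
            (if y.val < c.val then y.val else y.val - 1) := congrArg Fin.val h
        have h1 := x.isLt
        have h2 := y.isLt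
        apply Fin.ext
        split_ifs at h' <;> omega
      obtain ⟨a', d', ha', hd', hd'M, hbound', hmono'⟩ :=
        hM₀ M (le_max_left _ _) (fun m => f (χ (m * d)))
      refine ⟨a' * d, d' * d, Nat.mul_pos ha' hd, Nat.mul_pos hd' hd, ?_, ?_, ?_⟩
      · calc d' * d ≤ M * d := Nat.mul_le_mul_right d hd'M
          _ ≤ N := hMd
      · intro i hi
        have h1 : a' * d + i * (d' * d) = (a' + i * d') * d := by ring
        rw [h1]
        calc (a' + i * d') * d ≤ M * d := Nat.mul_le_mul_right d (hbound' i hi)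
          _ ≤ N := hMd
      · intro i hi
        have h1 : a' * d + i * (d' * d) = (a' + i * d') * d := by ring
        rw [h1]
        have hm1 : 1 ≤ a' + i * d' := by omega
        have hm2 : a' + i * d' ≤ M := hbound' i hi
        have hne1 : χ ((a' + i * d') * d) ≠ c := hcase _ hm1 hm2
        have hne2 : χ (d' * d) ≠ c := hcase _ hd' hd'M
        exact hfinj _ _ hne1 hne2 (hmono' i hi)
end

section
/- If a piecewise syndetic subset of ℕ is partitioned into finitely many parts, then at least one of the parts is piecewise syndetic. -/
/-- `S` is syndetic if finitely many shifts of `S` cover `ℕ`: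
there is `h` with `S ∪ (S-1) ∪ ... ∪ (S-h) = ℕ`, where `S-t = {n | n + t ∈ S}`. -/
def Syndetic (S : Set ℕ) : Prop := ∃ h : ℕ, ∀ n : ℕ, ∃ t ≤ h, n + t ∈ S

/-- `T` is thick if for every `h`, `T ∩ (T-1) ∩ ... ∩ (T-h) ≠ ∅`. -/
def Thick (T : Set ℕ) : Prop := ∀ h : ℕ, ∃ n : ℕ, ∀ t ≤ h, n + t ∈ T

/-- `A` is piecewise syndetic if it is the intersection of a syndetic and a thick set. -/
def PiecewiseSyndetic (A : Set ℕ) : Prop :=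
  ∃ S T : Set ℕ, Syndetic S ∧ Thick T ∧ A = S ∩ T

/-- Auxiliary characterization: there is `k` such that there are arbitrarily long
intervals on which `A` has gaps at most `k`. -/
def PS' (A : Set ℕ) : Prop := ∃ k : ℕ, ∀ h : ℕ, ∃ n : ℕ, ∀ t ≤ h, ∃ s ≤ k, n + t + s ∈ A

theorem ps'_of_pws {A : Set ℕ} (hA : PiecewiseSyndetic A) : PS' A := by
  obtain ⟨S, T, ⟨k, hS⟩, hT, rfl⟩ := hA
  refine ⟨k, fun h => ?_⟩
  obtain ⟨n, hn⟩ := hT (h + k)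
  refine ⟨n, fun t ht => ?_⟩
  obtain ⟨s, hs, hsS⟩ := hS (n + t)
  refine ⟨s, hs, hsS, ?_⟩
  have := hn (t + s) (by omega)
  rwa [← add_assoc] at this

theorem pws_of_ps' {A : Set ℕ} (hA : PS' A) : PiecewiseSyndetic A := by
  obtain ⟨k, hk⟩ := hA
  choose f hf using hk
  set T : Set ℕ := A ∪ {m | ∃ h, ∃ t ≤ h, m = f h + t} with hTdef
  refine ⟨A ∪ Tᶜ, T, ⟨k, fun n => ?_⟩, fun h => ⟨f h, fun t ht => Or.inr ⟨h, t, ht, rfl⟩⟩, ?_⟩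
  · by_cases hnT : n ∈ T
    · rcases hnT with hnA | ⟨h, t, ht, rfl⟩
      · exact ⟨0, Nat.zero_le _, Or.inl (by simpa using hnA)⟩
      · obtain ⟨s, hs, hsA⟩ := hf h t ht
        exact ⟨s, hs, Or.inl hsA⟩
    · exact ⟨0, Nat.zero_le _, Or.inr (by simpa using hnT)⟩
  · have hAT : A ⊆ T := fun x hx => Or.inl hx
    ext x
    constructor
    · exact fun hx => ⟨Or.inl hx, hAT hx⟩
    · rintro ⟨hx1 | hx1, hx2⟩
      · exact hx1
      · exact absurd hx2 hx1

theorem ps'_diff {A B : Set ℕ} (hA : PS' A) (hB : ¬ PS' B) : PS' (A \ B) := by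
  obtain ⟨k, hk⟩ := hA
  simp only [PS'] at hB
  push_neg at hB
  obtain ⟨H, hH⟩ := hB k
  refine ⟨H + k, fun h => ?_⟩
  obtain ⟨n, hn⟩ := hk (h + H)
  refine ⟨n, fun t ht => ?_⟩
  obtain ⟨t', ht', hnotB⟩ := hH (n + t)
  obtain ⟨s, hs, hsA⟩ := hn (t + t') (by omega)
  refine ⟨t' + s, by omega, ?_, ?_⟩
  · have : n + t + (t' + s) = n + (t + t') + s := by ring
    rwa [this]
  · have : n + t + (t' + s) = n + t + t' + s := by ring
    rw [this]
    exact hnotB s hs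

theorem ps'_union {r : ℕ} : ∀ (A : Set ℕ) (C : Fin r → Set ℕ),
    PS' A → A ⊆ ⋃ i, C i → ∃ i, PS' (C i) := by
  induction r with
  | zero =>
    intro A C hA hsub
    obtain ⟨k, hk⟩ := hA
    obtain ⟨n, hn⟩ := hk 0
    obtain ⟨s, _, hsA⟩ := hn 0 le_rfl
    obtain ⟨i, -⟩ := Set.mem_iUnion.mp (hsub hsA)
    exact i.elim0
  | succ r ih =>
    intro A C hA hsub
    by_cases hlast : PS' (C (Fin.last r))
    · exact ⟨Fin.last r, hlast⟩
    · have hA' : PS' (A \ C (Fin.last r)) := ps'_diff hA hlast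
      have hsub' : A \ C (Fin.last r) ⊆ ⋃ i : Fin r, C i.castSucc := by
        rintro x ⟨hxA, hxC⟩
        obtain ⟨j, hj⟩ := Set.mem_iUnion.mp (hsub hxA)
        have hjne : j ≠ Fin.last r := fun hje => hxC (hje ▸ hj)
        have hjlt : (j : ℕ) < r := by
          rcases Fin.lt_or_eq_of_le (Fin.le_last j) with hlt | heq
          · exact hlt
          · exact absurd heq hjne
        refine Set.mem_iUnion.mpr ⟨⟨j, hjlt⟩, ?_⟩
        have : Fin.castSucc (⟨j, hjlt⟩ : Fin r) = j := by
          ext; simp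
        rwa [this]
      obtain ⟨i, hi⟩ := ih _ _ hA' hsub'
      exact ⟨i.castSucc, hi⟩

/-- Partition regularity of piecewise syndetic sets: if a piecewise syndetic subset of `ℕ`
is partitioned into finitely many parts, one of the parts is piecewise syndetic. -/
theorem piecewiseSyndetic_partition_regular (A : Set ℕ) (hA : PiecewiseSyndetic A)
    (r : ℕ) (C : Fin r → Set ℕ) (hpart : A = ⋃ i, C i) :
    ∃ i, PiecewiseSyndetic (C i) := by
  obtain ⟨i, hi⟩ := ps'_union A C (ps'_of_pws hA) (hpart ▸ Set.Subset.rfl)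
  exact ⟨i, pws_of_ps' hi⟩
end

section
/- If ℕ is partitioned into finitely many parts, then at least one of the parts is piecewise syndetic. (Brown's lemma.) -/
lemma ps_of_thick_approx (A : Set ℕ) (d : ℕ)
    (hT : Thick {n | ∃ s ≤ d, n + s ∈ A}) : PiecewiseSyndetic A := by
  refine ⟨A ∪ {n | ∀ t ≤ d, n + t ∉ A}, {n | ∃ s ≤ d, n + s ∈ A}, ?_, hT, ?_⟩
  · refine ⟨d, fun n => ?_⟩
    by_cases h : ∃ t ≤ d, n + t ∈ A
    · obtain ⟨t, ht, hA⟩ := h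
      exact ⟨t, ht, Or.inl hA⟩
    · push_neg at h
      exact ⟨0, Nat.zero_le d, Or.inr (by simpa using h)⟩
  · ext x
    constructor
    · intro hx
      exact ⟨Or.inl hx, ⟨0, Nat.zero_le d, by simpa using hx⟩⟩
    · intro hx
      rcases hx with ⟨hS | hS, hT'⟩
      · exact hS
      · obtain ⟨s, hs, hA⟩ := hT'
        exact absurd hA (hS s hs)

lemma key_gaps : ∀ (r : ℕ) (C : Fin r → Set ℕ),
    (∀ i d, ∃ h, ∀ n, ∃ t ≤ h, ∀ s ≤ d, n + t + s ∉ C i) →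
    ∀ d, ∃ n, ∀ s ≤ d, ∀ i, n + s ∉ C i := by
  intro r
  induction r with
  | zero => exact fun C _ d => ⟨0, fun s _ i => i.elim0⟩
  | succ r ih =>
    intro C hC d
    obtain ⟨h, hh⟩ := hC (Fin.last r) d
    obtain ⟨n, hn⟩ := ih (fun i => C i.castSucc) (fun i d => hC i.castSucc d) (h + d)
    obtain ⟨t, ht, hgap⟩ := hh n
    refine ⟨n + t, fun s hs i => ?_⟩
    rcases Fin.eq_castSucc_or_eq_last i with ⟨j, rfl⟩ | rfl
    · have heq : n + t + s = n + (t + s) := by ring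
      rw [heq]
      exact hn (t + s) (by omega) j
    · exact hgap s hs

/-- Brown's lemma: if `ℕ` is partitioned into finitely many parts, then at least one of
the parts is piecewise syndetic. -/
theorem browns_lemma (r : ℕ) (C : Fin r → Set ℕ) (hpart : (⋃ i, C i) = Set.univ) :
    ∃ i, PiecewiseSyndetic (C i) := by
  by_contra hcon
  push_neg at hcon
  have hC : ∀ i d, ∃ h, ∀ n, ∃ t ≤ h, ∀ s ≤ d, n + t + s ∉ C i := by
    intro i d
    have hnt : ¬ Thick {n | ∃ s ≤ d, n + s ∈ C i} :=
      fun h => hcon i (ps_of_thick_approx _ d h)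
    unfold Thick at hnt
    push_neg at hnt
    obtain ⟨h, hh⟩ := hnt
    refine ⟨h, fun n => ?_⟩
    obtain ⟨t, ht, hnotin⟩ := hh n
    simp only [Set.mem_setOf_eq] at hnotin
    push_neg at hnotin
    exact ⟨t, ht, hnotin⟩
  obtain ⟨n, hn⟩ := key_gaps r C hC 0
  have hmem : n ∈ ⋃ i, C i := hpart ▸ Set.mem_univ n
  obtain ⟨_, ⟨i, rfl⟩, hni⟩ := hmem
  exact hn 0 le_rfl i (by simpa using hni)
end

section
/- For any piecewise syndetic set A ⊆ ℕ there exists a syndetic set L ⊆ ℕ such that for every finite non-empty F ⊆ L, the intersection ⋂_{m ∈ F} (A − m) is piecewise syndetic. (Intersectivity lemma for piecewise syndetic sets.) -/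
/-!
A set `A ⊆ ℕ` is piecewise syndetic exactly when it belongs to an ultrafilter `u` lying in a
minimal closed left ideal of `(βℕ, +)`. For such `u ∋ A` take `L = {m | A - m ∈ u}`. Every finite
intersection of the sets `A - m`, `m ∈ L`, again lies in `u` and is therefore piecewise syndetic.
If `L` were not syndetic, its complement would be thick, hence contained, with all its shifts, in
some ultrafilter `q`; minimality writes `u = w + q + u`, and `A ∈ w + q + u` forces `L` to meet a
shift of its complement.
-/

open Filter Set

attribute [local instance] Ultrafilter.add Ultrafilter.addSemigroup

/-- Following the convention of semigroup theory, left ideals are nonempty. -/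
structure IsClosedLeftIdeal {M : Type*} [Add M] [TopologicalSpace M] (I : Set M) : Prop where
  nonempty : I.Nonempty
  isClosed : IsClosed I
  add_mem (p : M) {q : M} : q ∈ I → p + q ∈ I

section ClosedLeftIdeal

variable {M : Type*} [TopologicalSpace M] [CompactSpace M]

theorem IsChain.isClosedLeftIdeal_sInter [Add M] {c : Set (Set M)} (hc : IsChain (· ⊆ ·) c)
    (hc₀ : c.Nonempty) (hcI : ∀ J ∈ c, IsClosedLeftIdeal J) : IsClosedLeftIdeal (⋂₀ c) where
  nonempty := by
    have : Nonempty c := hc₀.to_subtype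
    have hdir : DirectedOn (· ⊇ ·) c := fun J hJ K hK =>
      (hc.total hJ hK).elim (fun h => ⟨J, hJ, subset_rfl, h⟩) fun h => ⟨K, hK, h, subset_rfl⟩
    rw [sInter_eq_iInter]
    exact IsCompact.nonempty_iInter_of_directed_nonempty_isCompact_isClosed _ hdir.directed_val
      (fun J => (hcI J J.2).nonempty) (fun J => (hcI J J.2).isClosed.isCompact)
      fun J => (hcI J J.2).isClosed
  isClosed := isClosed_sInter fun J hJ => (hcI J hJ).isClosed
  add_mem p _ hq := mem_sInter.2 fun J hJ => (hcI J hJ).add_mem p (hq J hJ)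

theorem IsClosedLeftIdeal.exists_minimal_subset [Add M] {I : Set M} (hI : IsClosedLeftIdeal I) :
    ∃ J ⊆ I, Minimal IsClosedLeftIdeal J := by
  obtain ⟨J, hJI, hJ⟩ := zorn_superset_nonempty {J | IsClosedLeftIdeal J ∧ J ⊆ I}
    (fun c hcS hc hc₀ => ⟨⋂₀ c, ⟨hc.isClosedLeftIdeal_sInter hc₀ fun J hJ => (hcS hJ).1,
      (sInter_subset_of_mem hc₀.some_mem).trans (hcS hc₀.some_mem).2⟩,
      fun _ => sInter_subset_of_mem⟩) I ⟨hI, subset_rfl⟩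
  exact ⟨J, hJI, hJ.prop.1, fun K hK hKJ => hJ.2 ⟨hK, hKJ.trans hJI⟩ hKJ⟩

theorem isClosedLeftIdeal_range_add_right [AddSemigroup M] [T2Space M] {q : M}
    (hq : Continuous (· + q)) : IsClosedLeftIdeal (range (· + q)) where
  nonempty := ⟨q + q, mem_range_self q⟩
  isClosed := (isCompact_range hq).isClosed
  add_mem p := by
    rintro _ ⟨r, rfl⟩
    exact ⟨p + r, add_assoc p r q⟩

theorem Minimal.range_add_right_eq [AddSemigroup M] [T2Space M] {J : Set M}
    (hJ : Minimal IsClosedLeftIdeal J) {v : M} (hv : v ∈ J) (hcont : Continuous (· + v)) :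
    range (· + v) = J :=
  hJ.eq_of_subset (isClosedLeftIdeal_range_add_right hcont)
    (range_subset_iff.2 fun p => hJ.prop.add_mem p hv)

end ClosedLeftIdeal

theorem Ultrafilter.mem_add_iff {M : Type*} [Add M] {p q : Ultrafilter M} {B : Set M} :
    B ∈ p + q ↔ {m | {n | m + n ∈ B} ∈ q} ∈ p :=
  Iff.rfl

theorem Thick.exists_ultrafilter {B : Set ℕ} (hB : Thick B) :
    ∃ q : Ultrafilter ℕ, ∀ m, {n | m + n ∈ B} ∈ q := by
  set run : ℕ → Set ℕ := fun h => {n | ∀ t ≤ h, n + t ∈ B}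
  have hrun : Antitone run := fun h h' hh n hn t ht => hn t (ht.trans hh)
  have : NeBot (⨅ h, 𝓟 (run h)) :=
    iInf_neBot_of_directed' (monotone_principal.comp_antitone hrun).directed_ge
      fun h => principal_neBot_iff.2 (hB h)
  refine ⟨Ultrafilter.of (⨅ h, 𝓟 (run h)), fun m => Ultrafilter.of_le _ ?_⟩
  refine mem_iInf_of_mem m (mem_principal.2 fun n hn => ?_)
  rw [mem_ofPred_eq, add_comm]
  exact hn m le_rfl

theorem piecewiseSyndetic_iff_exists_thick {A : Set ℕ} :
    PiecewiseSyndetic A ↔ ∃ h, Thick {x | ∃ s ≤ h, x + s ∈ A} := by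
  constructor
  · rintro ⟨S, T, ⟨h, hS⟩, hT, rfl⟩
    refine ⟨h, fun N => ?_⟩
    obtain ⟨n, hn⟩ := hT (N + h)
    refine ⟨n, fun t ht => ?_⟩
    obtain ⟨s, hs, hsS⟩ := hS (n + t)
    exact ⟨s, hs, hsS, by simpa only [add_assoc] using hn (t + s) (by omega)⟩
  · rintro ⟨h, hB⟩
    refine ⟨A ∪ {x | ∃ s ≤ h, x + s ∈ A}ᶜ, {x | ∃ s ≤ h, x + s ∈ A}, ⟨h, fun n => ?_⟩, hB, ?_⟩
    · by_cases hn : ∃ s ≤ h, n + s ∈ A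
      · obtain ⟨s, hs, hsA⟩ := hn
        exact ⟨s, hs, Or.inl hsA⟩
      · exact ⟨0, Nat.zero_le h, Or.inr hn⟩
    · rw [union_inter_distrib_right, compl_inter_self, union_empty]
      refine (inter_eq_left.2 fun x hx => ?_).symm
      exact ⟨0, Nat.zero_le h, hx⟩

section MinimalIdeal

variable {J : Set (Ultrafilter ℕ)} {u : Ultrafilter ℕ}

theorem syndetic_of_mem_minimal (hJ : Minimal IsClosedLeftIdeal J) (hu : u ∈ J) {B : Set ℕ}
    (hB : B ∈ u) : Syndetic {m | {n | n + m ∈ B} ∈ u} := by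
  set L := {m | {n | n + m ∈ B} ∈ u}
  by_contra hL
  have hLc : Thick Lᶜ := by simpa [Syndetic, Thick] using hL
  obtain ⟨q, hq⟩ := hLc.exists_ultrafilter
  obtain ⟨w, hw⟩ : u ∈ range (· + (q + u)) := by
    rwa [hJ.range_add_right_eq (hJ.prop.add_mem q hu) (Ultrafilter.continuous_add_left _)]
  have hBwqu : B ∈ w + q + u := by
    rwa [add_assoc, show w + (q + u) = u from hw]
  have hLwq : L ∈ w + q := by
    convert Ultrafilter.mem_add_iff.1 hBwqu using 1
    ext m
    simp only [L, mem_ofPred_eq, add_comm]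
  obtain ⟨a, ha⟩ := Ultrafilter.nonempty_of_mem (Ultrafilter.mem_add_iff.1 hLwq)
  obtain ⟨c, hcL, hcLc⟩ := Ultrafilter.nonempty_of_mem (inter_mem ha (hq a))
  exact hcLc hcL

theorem piecewiseSyndetic_of_mem_minimal (hJ : Minimal IsClosedLeftIdeal J) (hu : u ∈ J)
    {B : Set ℕ} (hB : B ∈ u) : PiecewiseSyndetic B := by
  obtain ⟨h, hL⟩ := syndetic_of_mem_minimal hJ hu hB
  refine piecewiseSyndetic_iff_exists_thick.2 ⟨h, fun N => ?_⟩
  have : ∀ᶠ n in u, ∀ t ∈ Iic N, ∃ s ≤ h, n + t + s ∈ B := by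
    rw [eventually_all_finite (finite_Iic N)]
    intro t _
    obtain ⟨s, hs, hts⟩ := hL t
    exact Eventually.mono hts fun n hn => ⟨s, hs, by rwa [add_assoc]⟩
  obtain ⟨n, hn⟩ := this.exists
  exact ⟨n, fun t ht => hn t ht⟩

theorem PiecewiseSyndetic.exists_mem_minimal {A : Set ℕ} (hA : PiecewiseSyndetic A) :
    ∃ J : Set (Ultrafilter ℕ), Minimal IsClosedLeftIdeal J ∧ ∃ u ∈ J, A ∈ u := by
  obtain ⟨h, hB⟩ := piecewiseSyndetic_iff_exists_thick.1 hA
  obtain ⟨q, hq⟩ := hB.exists_ultrafilter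
  obtain ⟨J, hJq, hJ⟩ :=
    (isClosedLeftIdeal_range_add_right (Ultrafilter.continuous_add_left q)).exists_minimal_subset
  obtain ⟨r, hr⟩ := hJ.prop.nonempty
  obtain ⟨p, rfl : p + q = r⟩ := hJq hr
  have hBpq : ∀ᶠ x in ↑(p + q), ∃ s ∈ Iic h, x + s ∈ A :=
    Ultrafilter.mem_add_iff.2 (univ_mem' hq)
  obtain ⟨s, -, hs⟩ := (Ultrafilter.eventually_exists_mem_iff (finite_Iic h)).1 hBpq
  have hsA : ∀ᶠ n in ↑(p + q), s + n ∈ A := hs.mono fun n => by rw [add_comm]; exact id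
  exact ⟨J, hJ, pure s + (p + q), hJ.prop.add_mem (pure s) hr, hsA⟩

end MinimalIdeal

/-- Intersectivity lemma for piecewise syndetic sets: for any piecewise syndetic `A ⊆ ℕ`
there is a syndetic `L ⊆ ℕ` such that for every finite non-empty `F ⊆ L`, the set
`⋂ m ∈ F, (A - m)` is piecewise syndetic. -/
theorem intersectivity_piecewiseSyndetic (A : Set ℕ) (hA : PiecewiseSyndetic A) :
    ∃ L : Set ℕ, Syndetic L ∧ ∀ F : Finset ℕ, F.Nonempty → (F : Set ℕ) ⊆ L →
      PiecewiseSyndetic (⋂ m ∈ F, {n : ℕ | n + m ∈ A}) := by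
  obtain ⟨J, hJ, u, hu, hAu⟩ := hA.exists_mem_minimal
  refine ⟨{m | {n | n + m ∈ A} ∈ u}, syndetic_of_mem_minimal hJ hu hAu, fun F _ hFL => ?_⟩
  exact piecewiseSyndetic_of_mem_minimal hJ hu ((biInter_finset_mem F).2 hFL)
end

section
/- Assume van der Waerden's theorem for syndetic sets: every syndetic subset of ℕ contains a k-term arithmetic progression. Then for every piecewise syndetic set A ⊆ ℕ and every k, there exist a piecewise syndetic set B ⊆ ℕ and d ∈ ℕ such that {b, b+d, ..., b+(k-1)d} ⊆ A for every b ∈ B. -/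
open Filter Set

/-- The `h`-window set: points having a member of `C` within distance `h` to the right. -/
def Win (C : Set ℕ) (h : ℕ) : Set ℕ := {n | ∃ t ≤ h, n + t ∈ C}

lemma pws_of_thick_win {A : Set ℕ} {h : ℕ} (hth : Thick (Win A h)) :
    PiecewiseSyndetic A := by
  refine ⟨A ∪ (Win A h)ᶜ, Win A h, ⟨h, ?_⟩, hth, ?_⟩
  · intro n
    by_cases hn : n ∈ Win A h
    · obtain ⟨t, ht, hA⟩ := hn
      exact ⟨t, ht, Or.inl hA⟩
    · exact ⟨0, Nat.zero_le _, Or.inr hn⟩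
  · ext x
    constructor
    · intro hx
      exact ⟨Or.inl hx, ⟨0, Nat.zero_le _, by simpa using hx⟩⟩
    · rintro ⟨hx | hx, hU⟩
      · exact hx
      · exact absurd hU hx

lemma thick_win_of_pws {A : Set ℕ} (hA : PiecewiseSyndetic A) :
    ∃ h, Thick (Win A h) := by
  obtain ⟨S, T, ⟨h, hS⟩, hT, rfl⟩ := hA
  refine ⟨h, fun L => ?_⟩
  obtain ⟨n, hn⟩ := hT (L + h)
  refine ⟨n, fun s hs => ?_⟩
  obtain ⟨t, ht, hSt⟩ := hS (n + s)
  refine ⟨t, ht, ?_, ?_⟩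
  · exact hSt
  · have : n + s + t = n + (s + t) := by ring
    rw [this]
    exact hn (s + t) (by omega)

/-- Ultrafilter limit of a set that is "syndetic on arbitrarily long windows":
a genuinely syndetic limit set whose finite patterns all occur in `C`. -/
lemma limit_exists {C : Set ℕ} {h : ℕ} (hth : Thick (Win C h)) :
    ∃ D : Set ℕ, (∀ n, ∃ t ≤ h, n + t ∈ D) ∧
      ∀ M, ∃ p, ∀ s ≤ M, (s ∈ D ↔ p + s ∈ C) := by
  choose nseq hnseq using hth
  set U : Ultrafilter ℕ := hyperfilter ℕ with hU
  set D : Set ℕ := {s | {L | nseq L + s ∈ C} ∈ U} with hD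
  refine ⟨D, ?_, ?_⟩
  · intro s
    have hbig : {L | s ≤ L} ∈ U := by
      apply mem_hyperfilter_of_finite_compl
      apply Set.Finite.subset (Set.finite_lt_nat s)
      intro L hL
      simpa using hL
    have hsub : {L | s ≤ L} ⊆ ⋃ t ∈ {t : ℕ | t ≤ h}, {L | nseq L + (s + t) ∈ C} := by
      intro L hL
      obtain ⟨t, ht, hC⟩ := hnseq L s hL
      refine Set.mem_biUnion ht ?_
      show nseq L + (s + t) ∈ C
      have : nseq L + (s + t) = nseq L + s + t := by ring
      rw [this]; exact hC
    have hmem : (⋃ t ∈ {t : ℕ | t ≤ h}, {L | nseq L + (s + t) ∈ C}) ∈ U :=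
      mem_of_superset hbig hsub
    obtain ⟨t, ht, hv⟩ := (Ultrafilter.finite_biUnion_mem_iff (Set.finite_le_nat h)).1 hmem
    exact ⟨t, ht, hv⟩
  · intro M
    classical
    set E : ℕ → Set ℕ := fun s =>
      if s ∈ D then {L | nseq L + s ∈ C} else {L | nseq L + s ∈ C}ᶜ with hE
    have hEmem : ∀ s, E s ∈ U := by
      intro s
      by_cases hs : s ∈ D
      · have he : E s = {L | nseq L + s ∈ C} := by rw [hE]; simp [hs]
        rw [he]; exact hs
      · have he : E s = {L | nseq L + s ∈ C}ᶜ := by rw [hE]; simp [hs]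
        rw [he]
        exact Ultrafilter.compl_mem_iff_notMem.2 hs
    have hInt : (⋂ s ∈ {s : ℕ | s ≤ M}, E s) ∈ U :=
      (biInter_mem (Set.finite_le_nat M)).2 fun s _ => hEmem s
    obtain ⟨L, hL⟩ := Ultrafilter.nonempty_of_mem hInt
    refine ⟨nseq L, fun s hs => ?_⟩
    have hLs : L ∈ E s := by
      have := Set.mem_iInter₂.1 hL s hs
      exact this
    by_cases hsD : s ∈ D
    · simp only [hE, hsD, if_true] at hLs
      exact ⟨fun _ => hLs, fun _ => hsD⟩
    · simp only [hE, hsD, if_false] at hLs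
      exact ⟨fun hc => absurd hc hsD, fun hc => absurd hc hLs⟩

/-- Any piecewise-syndetic-style set (thick window form) contains a `k`-AP,
given van der Waerden for syndetic sets. -/
lemma ap_of_thick_win
    (hvdWsyn : ∀ S : Set ℕ, Syndetic S → ∀ k : ℕ,
      ∃ a d : ℕ, 0 < a ∧ 0 < d ∧ ∀ i < k, a + i * d ∈ S)
    {C : Set ℕ} {h : ℕ} (hth : Thick (Win C h)) (k : ℕ) :
    ∃ a d : ℕ, 0 < d ∧ ∀ i < k, a + i * d ∈ C := by
  obtain ⟨D, hsyn, hcopy⟩ := limit_exists hth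
  obtain ⟨a, d, -, hd, hap⟩ := hvdWsyn D ⟨h, hsyn⟩ k
  obtain ⟨p, hp⟩ := hcopy (a + k * d)
  refine ⟨p + a, d, hd, fun i hi => ?_⟩
  have hle : a + i * d ≤ a + k * d := by
    have : i * d ≤ k * d := Nat.mul_le_mul_right d hi.le
    omega
  have := (hp (a + i * d) hle).1 (hap i hi)
  have he : p + a + i * d = p + (a + i * d) := by ring
  rw [he]; exact this

/-- If boundedly many shifts of a finite union cover `ℕ`, one member is
piecewise syndetic (in thick-window form). -/
lemma union_pws {ι : Type} [DecidableEq ι] (F : Finset ι) (C : ι → Set ℕ) :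
    ∀ N : ℕ, (∀ n, ∃ t ≤ N, ∃ j ∈ F, n + t ∈ C j) →
      ∃ j ∈ F, ∃ h', Thick (Win (C j) h') := by
  induction F using Finset.induction_on with
  | empty =>
    intro N hcov
    obtain ⟨t, -, j, hj, -⟩ := hcov 0
    exact absurd hj (Finset.notMem_empty j)
  | @insert a F haF ih =>
    intro N hcov
    by_cases hpa : ∃ h', Thick (Win (C a) h')
    · exact ⟨a, Finset.mem_insert_self a F, hpa⟩
    · push_neg at hpa
      have hnt := hpa N
      rw [Thick] at hnt
      push_neg at hnt
      obtain ⟨P, hP⟩ := hnt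
      have hcov' : ∀ n, ∃ t ≤ P + N, ∃ j ∈ F, n + t ∈ C j := by
        intro n
        obtain ⟨s, hsP, hs⟩ := hP n
        obtain ⟨t, htN, j, hj, hmem⟩ := hcov (n + s)
        have hjF : j ∈ F := by
          rcases Finset.mem_insert.1 hj with rfl | hjF
          · exact absurd ⟨t, htN, hmem⟩ hs
          · exact hjF
        refine ⟨s + t, by omega, j, hjF, ?_⟩
        have : n + (s + t) = n + s + t := by ring
        rw [this]; exact hmem
      obtain ⟨j, hjF, hj⟩ := ih (P + N) hcov'
      exact ⟨j, Finset.mem_insert_of_mem hjF, hj⟩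

/-- Infinite coloring van der Waerden, from syndetic vdW. -/
lemma color_ap
    (hvdWsyn : ∀ S : Set ℕ, Syndetic S → ∀ k : ℕ,
      ∃ a d : ℕ, 0 < a ∧ 0 < d ∧ ∀ i < k, a + i * d ∈ S)
    (r k : ℕ) (hk : 0 < k) (c : ℕ → Fin r) :
    ∃ a d, 0 < d ∧ ∀ i < k, c (a + i * d) = c a := by
  have hcov : ∀ n, ∃ t ≤ 0, ∃ j ∈ (Finset.univ : Finset (Fin r)), n + t ∈ {m | c m = j} :=
    fun n => ⟨0, le_refl 0, c n, Finset.mem_univ _, by simp⟩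
  obtain ⟨j, -, h', hth⟩ := union_pws Finset.univ (fun j => {m | c m = j}) 0 hcov
  obtain ⟨a, d, hd, hap⟩ := ap_of_thick_win hvdWsyn hth k
  have h0 : c a = j := by
    have := hap 0 hk
    simpa using this
  exact ⟨a, d, hd, fun i hi => by rw [h0]; exact hap i hi⟩

/-- Finitary van der Waerden, by compactness from the infinite coloring version. -/
lemma finitary_vdW
    (hvdWsyn : ∀ S : Set ℕ, Syndetic S → ∀ k : ℕ,
      ∃ a d : ℕ, 0 < a ∧ 0 < d ∧ ∀ i < k, a + i * d ∈ S)
    (r k : ℕ) (hk : 0 < k) :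
    ∃ N, ∀ c : ℕ → Fin r, ∃ a d, 0 < d ∧ a + k * d ≤ N ∧
      ∀ i < k, c (a + i * d) = c a := by
  by_contra hcon
  push_neg at hcon
  choose cs hcs using hcon
  set U : Ultrafilter ℕ := hyperfilter ℕ with hU
  have pig : ∀ s, ∃ v : Fin r, {N | cs N s = v} ∈ U := by
    intro s
    have huniv : (⋃ v ∈ (Set.univ : Set (Fin r)), {N | cs N s = v}) ∈ U := by
      have : (⋃ v ∈ (Set.univ : Set (Fin r)), {N | cs N s = v}) = Set.univ := by
        ext N; simp
      rw [this]; exact univ_mem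
    obtain ⟨v, -, hv⟩ := (Ultrafilter.finite_biUnion_mem_iff Set.finite_univ).1 huniv
    exact ⟨v, hv⟩
  choose cinf hcinf using pig
  obtain ⟨a, d, hd, hap⟩ := color_ap hvdWsyn r k hk cinf
  set M := a + k * d with hM
  have hmatch : (⋂ s ∈ {s : ℕ | s ≤ M}, {N | cs N s = cinf s}) ∈ U :=
    (biInter_mem (Set.finite_le_nat M)).2 fun s _ => hcinf s
  have hbig : {N | M ≤ N} ∈ U := by
    apply mem_hyperfilter_of_finite_compl
    apply Set.Finite.subset (Set.finite_lt_nat M)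
    intro L hL
    simpa using hL
  obtain ⟨N, hN⟩ := Ultrafilter.nonempty_of_mem (inter_mem hmatch hbig)
  obtain ⟨hN1, hN2⟩ := hN
  obtain ⟨i, hik, hne⟩ := hcs N a d hd (by simpa using hN2)
  apply hne
  have hmem : ∀ s ≤ M, cs N s = cinf s := by
    intro s hs
    exact Set.mem_iInter₂.1 hN1 s hs
  have h1 : cs N (a + i * d) = cinf (a + i * d) := by
    apply hmem
    have : i * d ≤ k * d := Nat.mul_le_mul_right d hik.le
    omega
  have h2 : cs N a = cinf a := hmem a (by omega)
  rw [h1, h2]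
  exact hap i hik

/-- Amplified van der Waerden theorem for piecewise syndetic sets, assuming van der
Waerden's theorem for syndetic sets: every piecewise syndetic `A` contains a piecewise
syndetic set `B` of starters of `k`-term progressions with a common difference `d`. -/
theorem vdW_pws_amplified
    (hvdWsyn : ∀ S : Set ℕ, Syndetic S → ∀ k : ℕ,
      ∃ a d : ℕ, 0 < a ∧ 0 < d ∧ ∀ i < k, a + i * d ∈ S) :
    ∀ A : Set ℕ, PiecewiseSyndetic A → ∀ k : ℕ,
      ∃ (B : Set ℕ) (d : ℕ), PiecewiseSyndetic B ∧ 0 < d ∧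
        ∀ b ∈ B, ∀ i < k, b + i * d ∈ A := by
  intro A hA k
  rcases Nat.eq_zero_or_pos k with hk0 | hk
  · exact ⟨A, 1, hA, one_pos, fun b _ i hi => absurd hi (by omega)⟩
  obtain ⟨h, hth⟩ := thick_win_of_pws hA
  obtain ⟨D, hsyn, hcopy⟩ := limit_exists hth
  choose ct hct1 hct2 using hsyn
  set c : ℕ → Fin (h + 1) := fun n => ⟨ct n, Nat.lt_succ_of_le (hct1 n)⟩ with hc
  obtain ⟨N, hN⟩ := finitary_vdW hvdWsyn (h + 1) k hk
  set F : Finset (ℕ × ℕ) := (Finset.range (N + 1)) ×ˢ (Finset.range (h + 1)) with hF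
  set CC : ℕ × ℕ → Set ℕ :=
    fun p => {a | 0 < p.1 ∧ ∀ i < k, a + p.2 + i * p.1 ∈ D} with hCC
  have hcov : ∀ n, ∃ t ≤ N, ∃ j ∈ F, n + t ∈ CC j := by
    intro n
    obtain ⟨a, d, hd, hle, hmono⟩ := hN (fun s => c (n + s))
    have hdN : d ≤ N := by
      have : k * d ≤ N := by omega
      have : d ≤ k * d := Nat.le_mul_of_pos_left d hk
      omega
    refine ⟨a, by omega, (d, ct (n + a)), ?_, ?_, ?_⟩
    · simp only [hF, Finset.mem_product, Finset.mem_range]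
      exact ⟨by omega, Nat.lt_succ_of_le (hct1 (n + a))⟩
    · exact hd
    · intro i hi
      have hcol := hmono i hi
      have hval : ct (n + (a + i * d)) = ct (n + a) := by
        have := congrArg Fin.val hcol
        simpa [hc] using this
      have hmem := hct2 (n + (a + i * d))
      rw [hval] at hmem
      have he : n + a + ct (n + a) + i * d = n + (a + i * d) + ct (n + a) := by ring
      rw [he]
      exact hmem
  obtain ⟨⟨d, t⟩, hjF, h', hthC⟩ := union_pws F CC N hcov
  have hdpos : 0 < d := by
    obtain ⟨n, hn⟩ := hthC 0
    obtain ⟨u, -, hu⟩ := hn 0 (le_refl 0)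
    exact hu.1
  refine ⟨{b | ∀ i < k, b + i * d ∈ A}, d, ?_, hdpos, fun b hb i hi => hb i hi⟩
  apply pws_of_thick_win (h := h' + t)
  intro L
  obtain ⟨p, hp⟩ := hthC L
  obtain ⟨q, hq⟩ := hcopy (p + L + h' + t + k * d)
  refine ⟨q + p, fun s hs => ?_⟩
  obtain ⟨u, hu, huC⟩ := hp s hs
  refine ⟨u + t, by omega, fun i hi => ?_⟩
  have hiD := huC.2 i hi
  -- hiD : p + s + u + t + i * d ∈ D
  have hσ : p + s + u + t + i * d ≤ p + L + h' + t + k * d := by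
    have : i * d ≤ k * d := Nat.mul_le_mul_right d hi.le
    omega
  have := (hq _ hσ).1 hiD
  have he : q + p + s + (u + t) + i * d = q + (p + s + u + t + i * d) := by ring
  rw [he]
  exact this
end

section
/- If a multiplicatively piecewise syndetic subset of ℕ is partitioned into finitely many parts, then at least one of the parts is multiplicatively piecewise syndetic. -/
/-- `S` is multiplicatively syndetic if there is `h ≥ 1` with
`S ∪ S/2 ∪ ... ∪ S/h = ℕ`, where `S/t = {n | t·n ∈ S}` (over positive integers). -/
def MulSyndetic (S : Set ℕ) : Prop :=
  ∃ h : ℕ, 1 ≤ h ∧ ∀ n : ℕ, 0 < n → ∃ t : ℕ, 1 ≤ t ∧ t ≤ h ∧ t * n ∈ S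

/-- `T` is multiplicatively thick if for every `h`, `T ∩ T/2 ∩ ... ∩ T/h ≠ ∅`. -/
def MulThick (T : Set ℕ) : Prop :=
  ∀ h : ℕ, ∃ n : ℕ, 0 < n ∧ ∀ t : ℕ, 1 ≤ t → t ≤ h → t * n ∈ T

/-- `A` is multiplicatively piecewise syndetic if it is the intersection of a
multiplicatively syndetic set and a multiplicatively thick set. -/
def MulPiecewiseSyndetic (A : Set ℕ) : Prop :=
  ∃ S T : Set ℕ, MulSyndetic S ∧ MulThick T ∧ A = S ∩ T

/-- Auxiliary characterization: `A` is PWS iff for some `h ≥ 1`, the set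
`⋃_{t ≤ h} A/t` is multiplicatively thick. -/
def PWS (A : Set ℕ) : Prop :=
  ∃ h : ℕ, 1 ≤ h ∧ ∀ L : ℕ, ∃ n : ℕ, 0 < n ∧ ∀ s : ℕ, 1 ≤ s → s ≤ L →
    ∃ t : ℕ, 1 ≤ t ∧ t ≤ h ∧ t * (s * n) ∈ A

lemma pws_iff (A : Set ℕ) : MulPiecewiseSyndetic A ↔ PWS A := by
  constructor
  · rintro ⟨S, T, ⟨h, hh, hS⟩, hT, rfl⟩
    refine ⟨h, hh, fun L => ?_⟩
    obtain ⟨n, hn, hnT⟩ := hT (h * L)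
    refine ⟨n, hn, fun s hs1 hsL => ?_⟩
    obtain ⟨t, ht1, hth, htS⟩ := hS (s * n) (by positivity)
    refine ⟨t, ht1, hth, htS, ?_⟩
    have := hnT (t * s) (by nlinarith) (by nlinarith)
    rwa [mul_assoc] at this
  · rintro ⟨h, hh, hp⟩
    classical
    refine ⟨A ∪ {n | 0 < n ∧ ∀ t, 1 ≤ t → t ≤ h → t * n ∉ A},
      {n | n = 0 ∨ ∃ t, 1 ≤ t ∧ t ≤ h ∧ t * n ∈ A}, ⟨h, hh, fun n hn => ?_⟩,
      fun L => ?_, ?_⟩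
    · by_cases hc : ∃ t, 1 ≤ t ∧ t ≤ h ∧ t * n ∈ A
      · obtain ⟨t, ht1, hth, htA⟩ := hc
        exact ⟨t, ht1, hth, Or.inl htA⟩
      · push_neg at hc
        refine ⟨1, le_rfl, hh, Or.inr ?_⟩
        simp only [Set.mem_setOf_eq, one_mul]
        exact ⟨hn, hc⟩
    · obtain ⟨n, hn, hp'⟩ := hp L
      refine ⟨n, hn, fun t ht1 htL => Or.inr ?_⟩
      exact hp' t ht1 htL
    · ext m
      simp only [Set.mem_inter_iff, Set.mem_union, Set.mem_setOf_eq]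
      constructor
      · intro hm
        exact ⟨Or.inl hm, Or.inr ⟨1, le_rfl, hh, by simpa using hm⟩⟩
      · rintro ⟨hS, hT⟩
        rcases hS with h1 | ⟨hpos, h2⟩
        · exact h1
        · rcases hT with h0 | ⟨t, ht1, hth, htA⟩
          · omega
          · exact absurd htA (h2 t ht1 hth)

lemma pws_union {A B C : Set ℕ} (hA : PWS A) (hBC : A = B ∪ C) : PWS B ∨ PWS C := by
  by_cases hB : PWS B
  · exact Or.inl hB
  right
  obtain ⟨h, hh, hp⟩ := hA
  unfold PWS at hB
  push_neg at hB
  refine ⟨h, hh, fun L => ?_⟩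
  obtain ⟨m, hm⟩ := hB (h * (L + 1)) (by nlinarith)
  obtain ⟨n0, hn0, hthick⟩ := hp (m * (L + 1))
  obtain ⟨s, hs1, hsm, hsB⟩ := hm n0 hn0
  refine ⟨s * n0, by positivity, fun s' hs'1 hs'L => ?_⟩
  have hu1 : 1 ≤ s' * s := Nat.one_le_iff_ne_zero.mpr (by positivity)
  have hu2 : s' * s ≤ m * (L + 1) := by
    calc s' * s ≤ L * m := Nat.mul_le_mul hs'L hsm
    _ ≤ m * (L + 1) := by nlinarith
  obtain ⟨t, ht1, hth, htA⟩ := hthick (s' * s) hu1 hu2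
  have hne : t * (s' * (s * n0)) ∉ B := by
    have h1 : 1 ≤ t * s' := Nat.one_le_iff_ne_zero.mpr (by positivity)
    have h2 : t * s' ≤ h * (L + 1) := Nat.mul_le_mul hth (by omega)
    have := hsB (t * s') h1 h2
    rwa [show t * s' * (s * n0) = t * (s' * (s * n0)) by ring] at this
  refine ⟨t, ht1, hth, ?_⟩
  have hmem : t * (s' * (s * n0)) ∈ A := by
    rwa [show t * (s' * s * n0) = t * (s' * (s * n0)) by ring] at htA
  rw [hBC] at hmem
  rcases hmem with hb | hc
  · exact absurd hb hne
  · exact hc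

lemma pws_partition : ∀ (r : ℕ) (A : Set ℕ), PWS A → ∀ C : Fin r → Set ℕ,
    A = ⋃ i, C i → ∃ i, PWS (C i) := by
  intro r
  induction r with
  | zero =>
    intro A hA C hpart
    obtain ⟨h, hh, hp⟩ := hA
    obtain ⟨n, hn, hp1⟩ := hp 1
    obtain ⟨t, _, _, htA⟩ := hp1 1 le_rfl le_rfl
    rw [hpart] at htA
    simp only [Set.mem_iUnion] at htA
    obtain ⟨i, _⟩ := htA
    exact i.elim0
  | succ r ih =>
    intro A hA C hpart
    have hsplit : A = C 0 ∪ ⋃ i : Fin r, C i.succ := by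
      rw [hpart]
      ext m
      simp only [Set.mem_iUnion, Set.mem_union]
      constructor
      · rintro ⟨i, hi⟩
        rcases Fin.eq_zero_or_eq_succ i with h0 | ⟨j, hj⟩
        · exact Or.inl (h0 ▸ hi)
        · exact Or.inr ⟨j, hj ▸ hi⟩
      · rintro (h0 | ⟨j, hj⟩)
        · exact ⟨0, h0⟩
        · exact ⟨j.succ, hj⟩
    rcases pws_union hA hsplit with hB | hC
    · exact ⟨0, hB⟩
    · obtain ⟨i, hi⟩ := ih _ hC (fun i => C i.succ) rfl
      exact ⟨i.succ, hi⟩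

/-- If a multiplicatively piecewise syndetic subset of `ℕ` is partitioned into finitely
many parts, then at least one of the parts is multiplicatively piecewise syndetic. -/
theorem mulPiecewiseSyndetic_partition_regular (A : Set ℕ) (hA : MulPiecewiseSyndetic A)
    (r : ℕ) (C : Fin r → Set ℕ) (hpart : A = ⋃ i, C i) :
    ∃ i, MulPiecewiseSyndetic (C i) := by
  obtain ⟨i, hi⟩ := pws_partition r A ((pws_iff A).mp hA) C hpart
  exact ⟨i, (pws_iff _).mpr hi⟩
end

section
/- Assuming van der Waerden's theorem (every finite coloring of ℕ has a monochromatic k-term AP for all k), every multiplicatively syndetic subset of ℕ contains a k-term arithmetic progression for every k. -/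
/-- Assuming van der Waerden's theorem, every multiplicatively syndetic subset of `ℕ`
contains a `k`-term arithmetic progression for every `k`. -/
theorem vdW_mulSyndetic
    (hvdW : ∀ (r : ℕ) (χ : ℕ → Fin r) (k : ℕ),
      ∃ a d : ℕ, 0 < a ∧ 0 < d ∧ ∀ i < k, χ (a + i * d) = χ a) :
    ∀ S : Set ℕ, MulSyndetic S → ∀ k : ℕ,
      ∃ a d : ℕ, 0 < a ∧ 0 < d ∧ ∀ i < k, a + i * d ∈ S := by
  intro S hS k
  obtain ⟨h, hh, hsyn⟩ := hS
  choose t ht1 ht2 ht3 using hsyn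
  classical
  set χ : ℕ → Fin h := fun n =>
    if hn : 0 < n then ⟨t n hn - 1, by have := ht1 n hn; have := ht2 n hn; omega⟩
    else ⟨0, hh⟩ with hχ
  obtain ⟨a, d, ha, hd, hmono⟩ := hvdW h χ k
  refine ⟨t a ha * a, t a ha * d, ?_, ?_, ?_⟩
  · exact Nat.mul_pos (ht1 a ha) ha
  · exact Nat.mul_pos (ht1 a ha) hd
  · intro i hi
    have hpos : 0 < a + i * d := by omega
    have := hmono i hi
    simp only [hχ, dif_pos hpos, dif_pos ha] at this
    have heq : t (a + i * d) hpos = t a ha := by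
      have h1 := ht1 (a + i * d) hpos
      have h2 := ht1 a ha
      have := Fin.mk.injEq _ _ _ _ ▸ this
      omega
    have := ht3 (a + i * d) hpos
    rw [heq] at this
    have : t a ha * a + i * (t a ha * d) = t a ha * (a + i * d) := by ring
    rw [this]
    have := ht3 (a + i * d) hpos
    rwa [heq] at this
end

section
/- Let (X,T) be a topological dynamical system on a compact metric space with metric ρ, and let k ∈ ℕ. Assume that for every non-empty open U ⊆ X there exists n ∈ ℕ with U ∩ T^{-n}U ∩ ... ∩ T^{-(k-1)n}U ≠ ∅. Then for every ε > 0 the set Ω_ε = {x ∈ X : ∃ n ∈ ℕ, max_{1 ≤ i ≤ k-1} ρ(x, T^{in} x) < ε} is open and dense in X. -/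
/-- If every non-empty open set `U` of a topological dynamical system `(X,T)` satisfies
`U ∩ T⁻ⁿU ∩ ... ∩ T⁻⁽ᵏ⁻¹⁾ⁿU ≠ ∅` for some `n`, then for every `ε > 0` the set
`Ω_ε = {x | ∃ n ≥ 1, max_{1 ≤ i ≤ k-1} dist x (T^{i·n} x) < ε}` is open and dense. -/
theorem omega_eps_open_dense {X : Type*} [MetricSpace X] [CompactSpace X] (T : X ≃ₜ X)
    (k : ℕ)
    (hrec : ∀ U : Set X, IsOpen U → U.Nonempty →
      ∃ n : ℕ, 0 < n ∧ ∃ x ∈ U, ∀ i < k, (⇑T)^[i * n] x ∈ U)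
    (ε : ℝ) (hε : 0 < ε) :
    IsOpen {x : X | ∃ n : ℕ, 0 < n ∧ ∀ i : ℕ, 1 ≤ i → i < k → dist x ((⇑T)^[i * n] x) < ε} ∧
    Dense {x : X | ∃ n : ℕ, 0 < n ∧ ∀ i : ℕ, 1 ≤ i → i < k → dist x ((⇑T)^[i * n] x) < ε} := by
  constructor
  · have heq : {x : X | ∃ n : ℕ, 0 < n ∧ ∀ i : ℕ, 1 ≤ i → i < k →
        dist x ((⇑T)^[i * n] x) < ε} =
        ⋃ n ∈ {n : ℕ | 0 < n}, ⋂ i ∈ Finset.Ico 1 k,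
          {x : X | dist x ((⇑T)^[i * n] x) < ε} := by
      ext x
      simp [Finset.mem_Ico, and_imp]
    rw [heq]
    refine isOpen_biUnion fun n _ => isOpen_biInter_finset fun i _ => ?_
    exact isOpen_lt (continuous_id.dist (T.continuous.iterate _)) continuous_const
  · rw [dense_iff_inter_open]
    intro U hU ⟨x, hx⟩
    obtain ⟨r, hr, hball⟩ := Metric.isOpen_iff.1 hU x hx
    set δ := min r (ε / 2) with hδdef
    have hδ : 0 < δ := lt_min hr (by linarith)
    obtain ⟨n, hn, y, hy, hiter⟩ := hrec (Metric.ball x δ) Metric.isOpen_ball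
      ⟨x, Metric.mem_ball_self hδ⟩
    refine ⟨y, ?_, n, hn, fun i hi1 hik => ?_⟩
    · exact hball (Metric.ball_subset_ball (min_le_left _ _) hy)
    · have h1 : dist y x < δ := hy
      have h2 : dist ((⇑T)^[i * n] y) x < δ := hiter i hik
      calc dist y ((⇑T)^[i * n] y) ≤ dist y x + dist x ((⇑T)^[i * n] y) := dist_triangle _ _ _
        _ < δ + δ := by rw [dist_comm x]; linarith
        _ ≤ ε / 2 + ε / 2 := by have := min_le_right r (ε / 2); linarith
        _ = ε := by ring
end

section
/- Let (X,T) be a topological dynamical system on a compact metric space, and k ∈ ℕ. If for every non-empty open U ⊆ X there exists n ∈ ℕ with U ∩ T^{-n}U ∩ ... ∩ T^{-(k-1)n}U ≠ ∅, then the set of k-recurrent points of X is residual (comeager). -/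
/-!
The points that come back `ε`-close to themselves along some progression `n, 2n, …, (k-1)n`
form an open set, and multiple recurrence of small balls makes it dense. Their intersection over
`ε = 1/(q+1)` is therefore residual. A point in it is `k`-recurrent: if it is periodic, multiples
of its period are arbitrarily large return times; if not, its distances to `f^[1] x, …, f^[N] x`
are bounded below, so sufficiently good return times exceed `N`.
-/

open Filter Function Topology

section PseudoMetric

variable {X : Type*} [PseudoMetricSpace X]

def multiReturnSet (f : X → X) (k : ℕ) (ε : ℝ) : Set X :=
  {x | ∃ n, 0 < n ∧ ∀ i < k, dist x (f^[i * n] x) < ε}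

theorem multiReturnSet_mono (f : X → X) (k : ℕ) {ε δ : ℝ} (h : ε ≤ δ) :
    multiReturnSet f k ε ⊆ multiReturnSet f k δ :=
  fun _ ⟨n, hn, hx⟩ => ⟨n, hn, fun i hi => (hx i hi).trans_le h⟩

theorem isOpen_multiReturnSet {f : X → X} (hf : Continuous f) (k : ℕ) (ε : ℝ) :
    IsOpen (multiReturnSet f k ε) := by
  have : multiReturnSet f k ε =
      ⋃ n, ⋃ (_ : 0 < n), ⋂ i ∈ Finset.range k, {x | dist x (f^[i * n] x) < ε} := by
    ext x
    simp [multiReturnSet]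
  rw [this]
  refine isOpen_iUnion fun n => isOpen_iUnion fun _ => isOpen_biInter_finset fun i _ => ?_
  exact isOpen_lt (continuous_id.dist (hf.iterate _)) continuous_const

theorem dense_multiReturnSet {f : X → X} {k : ℕ}
    (hrec : ∀ U : Set X, IsOpen U → U.Nonempty → ∃ n, 0 < n ∧ ∃ x ∈ U, ∀ i < k, f^[i * n] x ∈ U)
    {ε : ℝ} (hε : 0 < ε) : Dense (multiReturnSet f k ε) := by
  refine dense_iff_inter_open.2 fun U hU ⟨y, hy⟩ => ?_
  obtain ⟨r, hr, hball⟩ := Metric.isOpen_iff.1 hU y hy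
  set ρ := min r (ε / 2)
  have hρ : 0 < ρ := lt_min hr (half_pos hε)
  obtain ⟨n, hn, x, hx, hiter⟩ :=
    hrec (Metric.ball y ρ) Metric.isOpen_ball ⟨y, Metric.mem_ball_self hρ⟩
  refine ⟨x, hball (Metric.ball_subset_ball (min_le_left _ _) hx), n, hn, fun i hi => ?_⟩
  calc dist x (f^[i * n] x) ≤ dist x y + dist (f^[i * n] x) y := dist_triangle_right _ _ _
    _ < ρ + ρ := add_lt_add hx (hiter i hi)
    _ ≤ ε := by linarith [min_le_right r (ε / 2)]

end PseudoMetric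

theorem frequently_forall_dist_iterate_lt {X : Type*} [MetricSpace X] {f : X → X} {k : ℕ} {x : X}
    (hx : ∀ ε > 0, x ∈ multiReturnSet f k ε) {ε : ℝ} (hε : 0 < ε) :
    ∃ᶠ n in atTop, 0 < n ∧ ∀ i < k, dist x (f^[i * n] x) < ε := by
  refine frequently_atTop'.2 fun N => ?_
  rcases le_or_gt k 1 with hk | hk
  · refine ⟨N + 1, N.lt_succ_self, N.succ_pos, fun i hi => ?_⟩
    simpa [show i = 0 by omega] using hε
  by_cases hper : ∃ p, 0 < p ∧ IsPeriodicPt f p x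
  · obtain ⟨p, hp, hpx⟩ := hper
    refine ⟨(N + 1) * p, by nlinarith, by positivity, fun i _ => ?_⟩
    rw [← mul_assoc, (hpx.const_mul _).eq, dist_self]
    exact hε
  push Not at hper
  have hsep : ∀ᶠ δ in 𝓝 (0 : ℝ), ∀ m ∈ Finset.Icc 1 N, δ < dist x (f^[m] x) :=
    (Finset.eventually_all _).2 fun m hm =>
      eventually_lt_nhds (dist_pos.2 fun h => hper m (Finset.mem_Icc.1 hm).1 h.symm)
  have hsmall : ∀ᶠ δ in 𝓝[>] (0 : ℝ), 0 < δ ∧ δ ≤ ε ∧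
      ∀ m ∈ Finset.Icc 1 N, δ < dist x (f^[m] x) :=
    eventually_mem_nhdsWithin.and <| nhdsWithin_le_nhds <| (eventually_le_nhds hε).and hsep
  obtain ⟨δ, hδ, hδε, hδsep⟩ := hsmall.exists
  obtain ⟨n, hn, hnx⟩ := hx δ hδ
  refine ⟨n, not_le.1 fun hnN => ?_, hn, fun i hi => (hnx i hi).trans_le hδε⟩
  have hfar := hδsep n (Finset.mem_Icc.2 ⟨hn, hnN⟩)
  have hclose := hnx 1 hk
  rw [one_mul] at hclose
  linarith

theorem kRecurrent_residual_general {X : Type*} [MetricSpace X] (T : X ≃ₜ X)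
    (k : ℕ)
    (hrec : ∀ U : Set X, IsOpen U → U.Nonempty →
      ∃ n : ℕ, 0 < n ∧ ∃ x ∈ U, ∀ i < k, (⇑T)^[i * n] x ∈ U) :
    {x : X | ∃ n : ℕ → ℕ, StrictMono n ∧ (∀ j, 0 < n j) ∧
      ∀ ε : ℝ, 0 < ε → ∃ J : ℕ, ∀ j : ℕ, J ≤ j → ∀ i < k,
        dist x ((⇑T)^[i * n j] x) < ε} ∈ residual X := by
  have hres : ∀ᶠ x in residual X, ∀ q : ℕ, x ∈ multiReturnSet T k (1 / (q + 1)) :=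
    eventually_countable_forall.2 fun q => residual_of_dense_open
      (isOpen_multiReturnSet T.continuous k _) (dense_multiReturnSet hrec (by positivity))
  filter_upwards [hres] with x hx
  have hx' : ∀ ε > 0, x ∈ multiReturnSet T k ε := fun ε hε =>
    let ⟨q, hq⟩ := exists_nat_one_div_lt hε
    multiReturnSet_mono T k hq.le (hx q)
  obtain ⟨n, hmono, hn⟩ := extraction_forall_of_frequently fun j : ℕ =>
    frequently_forall_dist_iterate_lt hx' (ε := 1 / (j + 1)) (by positivity)
  refine ⟨n, hmono, fun j => (hn j).1, fun ε hε => ?_⟩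
  obtain ⟨J, hJ⟩ := exists_nat_one_div_lt hε
  refine ⟨J, fun j hj i hi => (hn j).2 i hi |>.trans_le ?_ |>.trans hJ⟩
  gcongr

/-- If every non-empty open set `U` of a topological dynamical system `(X,T)` satisfies
`U ∩ T⁻ⁿU ∩ ... ∩ T⁻⁽ᵏ⁻¹⁾ⁿU ≠ ∅` for some `n`, then the set of `k`-recurrent points
is residual (comeager). -/
theorem kRecurrent_residual {X : Type*} [MetricSpace X] [CompactSpace X] (T : X ≃ₜ X)
    (k : ℕ)
    (hrec : ∀ U : Set X, IsOpen U → U.Nonempty →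
      ∃ n : ℕ, 0 < n ∧ ∃ x ∈ U, ∀ i < k, (⇑T)^[i * n] x ∈ U) :
    {x : X | ∃ n : ℕ → ℕ, StrictMono n ∧ (∀ j, 0 < n j) ∧
      ∀ ε : ℝ, 0 < ε → ∃ J : ℕ, ∀ j : ℕ, J ≤ j → ∀ i < k,
        dist x ((⇑T)^[i * n j] x) < ε} ∈ residual X :=
  kRecurrent_residual_general T k hrec
end

section
/- Let ℙ be a property of subsets of ℕ that is upward closed (if A has ℙ and A ⊆ B then B has ℙ) and partition regular (for any finite partition of ℕ, some cell has ℙ). Then there exists an ultrafilter p on ℕ such that every member of p has property ℙ. -/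
/-- If `P` is an upward-closed, partition regular property of subsets of `ℕ`, then there
is an ultrafilter on `ℕ` all of whose members have property `P`. -/
theorem exists_ultrafilter_of_partition_regular (P : Set ℕ → Prop)
    (hup : ∀ A B : Set ℕ, P A → A ⊆ B → P B)
    (hpart : ∀ (r : ℕ) (C : Fin r → Set ℕ), (⋃ i, C i) = Set.univ → ∃ i, P (C i)) :
    ∃ p : Ultrafilter ℕ, ∀ A ∈ p, P A := by
  set G : Set (Set ℕ) := {A | ¬ P Aᶜ} with hG
  have hfip : ∀ T : Finset (Set ℕ), (↑T : Set (Set ℕ)) ⊆ G → (⋂₀ (T : Set (Set ℕ))).Nonempty := by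
    intro T hT
    by_contra hne
    rw [Set.not_nonempty_iff_eq_empty] at hne
    have hcov : (⋃ i : Fin T.card, ((T.equivFin.symm i : Set ℕ))ᶜ) = Set.univ := by
      ext x
      simp only [Set.mem_iUnion, Set.mem_compl_iff, Set.mem_univ, iff_true]
      by_contra h
      push_neg at h
      have hx : x ∈ ⋂₀ (↑T : Set (Set ℕ)) := by
        intro A hA
        have := h (T.equivFin ⟨A, hA⟩)
        simpa using this
      rw [hne] at hx
      exact hx
    obtain ⟨i, hi⟩ := hpart T.card _ hcov
    exact hT (T.equivFin.symm i).2 hi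
  obtain ⟨p, hp⟩ := Ultrafilter.exists_ultrafilter_of_finite_inter_nonempty G hfip
  refine ⟨p, fun A hA => ?_⟩
  have : Aᶜ ∉ p := Ultrafilter.compl_notMem_iff.mpr hA
  have : Aᶜ ∉ G := fun h => this (hp h)
  simpa [hG] using this
end

section
/- Let A ∈ ℤ^{m×k} be an integer matrix satisfying the columns condition at level ℓ ≥ 1. Then there exist c ∈ ℕ, a subset J ⊆ {1,...,k}, integers σ_j for j ∈ J, and a matrix B ∈ ℤ^{m×k} satisfying the columns condition at level ℓ−1, such that whenever B·y = 0 for y ∈ ℤ^k, then for every a ∈ ℤ the vector x defined by x_j = a + σ_j y_j for j ∈ J and x_j = c·y_j for j ∉ J satisfies A·x = 0. -/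
/-- A matrix `A` satisfies the columns condition at level `ℓ` if the index set of its
columns can be partitioned into `J 0, J 1, ..., J ℓ` such that the columns in `J 0` sum
to zero, and for each `s ≥ 1`, the sum of the columns in `J s` is a rational linear
combination of the columns with indices in `J 0 ∪ ... ∪ J (s-1)`. -/
def ColumnsCondition {m k : ℕ} (A : Matrix (Fin m) (Fin k) ℤ) (ℓ : ℕ) : Prop :=
  ∃ J : Fin (ℓ + 1) → Finset (Fin k),
    (∀ s t : Fin (ℓ + 1), s ≠ t → Disjoint (J s) (J t)) ∧
    (∀ j : Fin k, ∃ s, j ∈ J s) ∧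
    (∀ i : Fin m, ∑ j ∈ J 0, A i j = 0) ∧
    (∀ s : Fin (ℓ + 1), 0 < (s : ℕ) →
      ∃ lam : Fin k → ℚ,
        (∀ j : Fin k, (∀ t : Fin (ℓ + 1), (t : ℕ) < (s : ℕ) → j ∉ J t) → lam j = 0) ∧
        (∀ i : Fin m, (∑ j ∈ J s, (A i j : ℚ)) = ∑ j : Fin k, lam j * (A i j : ℚ)))

/-- Reduction lemma for Rado's theorem: from a matrix satisfying the columns condition at
level `ℓ ≥ 1`, one obtains `c ∈ ℕ`, a set `J` of column indices, integers `σ_j`, and a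
matrix `B` satisfying the columns condition at level `ℓ - 1`, such that solutions of
`B·y = 0` lift to solutions of `A·x = 0` via
`x_j = a + σ_j y_j` for `j ∈ J` and `x_j = c·y_j` otherwise. -/
theorem columns_condition_reduction {m k : ℕ} (ℓ : ℕ) (hℓ : 1 ≤ ℓ)
    (A : Matrix (Fin m) (Fin k) ℤ) (hA : ColumnsCondition A ℓ) :
    ∃ c : ℕ, 0 < c ∧ ∃ (J : Finset (Fin k)) (σ : Fin k → ℤ)
      (B : Matrix (Fin m) (Fin k) ℤ),
      ColumnsCondition B (ℓ - 1) ∧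
      ∀ y : Fin k → ℤ, B.mulVec y = 0 →
        ∀ a : ℤ,
          A.mulVec (fun j => if j ∈ J then a + σ j * y j else (c : ℤ) * y j) = 0 := by

  obtain ⟨ℓ', rfl⟩ : ∃ ℓ', ℓ = ℓ' + 1 := ⟨ℓ - 1, by omega⟩
  obtain ⟨J, hdisj, hcov, h0, hs⟩ := hA
  have h01 : (0 : Fin (ℓ' + 2)) ≠ 1 := by
    simp [Fin.ext_iff]
  have hv1 : ((1 : Fin (ℓ' + 2)) : ℕ) = 1 := Fin.val_one ℓ'
  obtain ⟨lam, hlam0, hlam⟩ := hs 1 (by simp)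
  set c : ℕ := ∏ j : Fin k, (lam j).den with hc
  have hcpos : 0 < c := Finset.prod_pos fun j _ => (lam j).pos
  have hz : ∀ j : Fin k, ∃ z : ℤ, (z : ℚ) = (c : ℚ) * lam j := by
    intro j
    have hd : ((lam j).den : ℤ) ∣ (c : ℤ) :=
      Int.natCast_dvd_natCast.mpr (Finset.dvd_prod_of_mem _ (Finset.mem_univ j))
    obtain ⟨e, he⟩ := hd
    refine ⟨(lam j).num * e, ?_⟩
    have hcq : (c : ℚ) = ((lam j).den : ℚ) * (e : ℚ) := by exact_mod_cast he
    rw [hcq]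
    push_cast
    rw [mul_assoc, mul_comm ((e : ℚ)) (lam j), ← mul_assoc, mul_comm (((lam j).den : ℚ)) (lam j),
      Rat.mul_den_eq_num]
  choose z hzz using hz
  have hz0 : ∀ j, j ∉ J 0 → z j = 0 := by
    intro j hj
    have hl : lam j = 0 := by
      apply hlam0
      intro t ht
      have ht0 : t = 0 := by
        have : (t : ℕ) = 0 := by simpa using ht
        exact Fin.ext (by simpa using this)
      rwa [ht0]
    have : (z j : ℚ) = 0 := by rw [hzz j, hl, mul_zero]
    exact_mod_cast this
  set N : ℤ := 1 + ∑ j : Fin k, |z j| with hN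
  set σ : Fin k → ℤ := fun j => N - z j with hσ
  have hσpos : ∀ j, 0 < σ j := by
    intro j
    have h1 : z j ≤ |z j| := le_abs_self _
    have h2 : |z j| ≤ ∑ j', |z j'| :=
      Finset.single_le_sum (fun j' _ => abs_nonneg (z j')) (Finset.mem_univ j)
    simp only [hσ, hN]
    omega
  have hσQ : ∀ j, (σ j : ℚ) ≠ 0 := fun j =>
    Int.cast_ne_zero.mpr (ne_of_gt (hσpos j))
  set B : Matrix (Fin m) (Fin k) ℤ :=
    fun i j => if j ∈ J 0 then σ j * A i j else (c : ℤ) * A i j with hB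
  -- key identity over ℚ
  have hkey : ∀ i, (∑ j ∈ J 0, (σ j : ℚ) * (A i j : ℚ)) +
      (c : ℚ) * ∑ j ∈ J 1, (A i j : ℚ) = 0 := by
    intro i
    have e0 : ∑ j ∈ J 0, (A i j : ℚ) = 0 := by
      exact_mod_cast h0 i
    have e1 : ∑ j ∈ J 0, (σ j : ℚ) * (A i j : ℚ)
        = (N : ℚ) * (∑ j ∈ J 0, (A i j : ℚ)) - ∑ j ∈ J 0, (z j : ℚ) * (A i j : ℚ) := by
      rw [Finset.mul_sum, ← Finset.sum_sub_distrib]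
      refine Finset.sum_congr rfl fun j _ => ?_
      have : (σ j : ℚ) = (N : ℚ) - (z j : ℚ) := by simp [hσ]
      rw [this]; ring
    have e2 : ∑ j ∈ J 0, (z j : ℚ) * (A i j : ℚ)
        = ∑ j : Fin k, (z j : ℚ) * (A i j : ℚ) := by
      apply Finset.sum_subset (Finset.subset_univ _)
      intro j _ hj
      rw [show z j = 0 from hz0 j hj]
      simp
    have e3 : ∑ j : Fin k, (z j : ℚ) * (A i j : ℚ)
        = (c : ℚ) * ∑ j ∈ J 1, (A i j : ℚ) := by
      rw [hlam i, Finset.mul_sum]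
      refine Finset.sum_congr rfl fun j _ => ?_
      rw [hzz j]; ring
    rw [e1, e0, e2, e3]; ring
  refine ⟨c, hcpos, J 0, σ, B, ?_, ?_⟩
  · -- ColumnsCondition B ℓ'
    show ColumnsCondition B ℓ'
    refine ⟨fun s => if s = 0 then J 0 ∪ J 1 else J s.succ, ?_, ?_, ?_, ?_⟩
    · intro s t hst
      have key : ∀ u : Fin (ℓ' + 1), u ≠ 0 → Disjoint (J 0 ∪ J 1) (J u.succ) := by
        intro u hu
        rw [Finset.disjoint_union_left]
        constructor
        · exact hdisj 0 u.succ (Ne.symm (Fin.succ_ne_zero u))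
        · refine hdisj 1 u.succ fun h => hu ?_
          have : u.succ = Fin.succ 0 := by
            rw [← h]; exact Fin.ext (by simp)
          exact Fin.succ_injective _ this
      by_cases hs0 : s = 0 <;> by_cases ht0 : t = 0
      · exact absurd (hs0.trans ht0.symm) hst
      · simp only [hs0, if_pos rfl, if_neg ht0]
        exact key t ht0
      · simp only [ht0, if_pos rfl, if_neg hs0]
        exact (key s hs0).symm
      · simp only [if_neg hs0, if_neg ht0]
        exact hdisj s.succ t.succ fun h => hst (Fin.succ_injective _ h)
    · intro j
      obtain ⟨s, hjs⟩ := hcov j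
      by_cases h : (s : ℕ) ≤ 1
      · refine ⟨0, ?_⟩
        dsimp only
        rw [if_pos rfl, Finset.mem_union]
        rcases Nat.lt_or_ge (s : ℕ) 1 with h1 | h1
        · left; rwa [show s = 0 from Fin.ext (by simp only [Fin.val_zero]; omega)] at hjs
        · right; rwa [show s = 1 from Fin.ext (by rw [hv1]; omega)] at hjs
      · push_neg at h
        have hsv : (s : ℕ) < ℓ' + 2 := s.isLt
        refine ⟨⟨(s : ℕ) - 1, by omega⟩, ?_⟩
        dsimp only
        have hne : (⟨(s : ℕ) - 1, by omega⟩ : Fin (ℓ' + 1)) ≠ 0 := by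
          simp [Fin.ext_iff]; omega
        rw [if_neg hne]
        have : Fin.succ (⟨(s : ℕ) - 1, by omega⟩ : Fin (ℓ' + 1)) = s :=
          Fin.ext (by simp [Fin.val_succ]; omega)
        rwa [this]
    · intro i
      dsimp only
      rw [if_pos rfl, Finset.sum_union (hdisj 0 1 h01)]
      have hb0 : ∑ j ∈ J 0, B i j = ∑ j ∈ J 0, σ j * A i j :=
        Finset.sum_congr rfl fun j hj => by simp [hB, hj]
      have hb1 : ∑ j ∈ J 1, B i j = ∑ j ∈ J 1, (c : ℤ) * A i j := by
        refine Finset.sum_congr rfl fun j hj => ?_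
        have : j ∉ J 0 := Finset.disjoint_left.mp (hdisj 1 0 (Ne.symm h01)) hj
        simp [hB, this]
      have hkZ : (∑ j ∈ J 0, σ j * A i j) + (c : ℤ) * ∑ j ∈ J 1, A i j = 0 := by
        exact_mod_cast hkey i
      rw [hb0, hb1, ← Finset.mul_sum]
      linarith
    · intro s hspos
      have hsne : s ≠ 0 := by
        intro h; rw [h] at hspos; simp at hspos
      obtain ⟨μ, hμ0, hμ⟩ := hs s.succ (by simp [Fin.val_succ])
      refine ⟨fun j => if j ∈ J 0 then (c : ℚ) * μ j / σ j else μ j, ?_, ?_⟩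
      · intro j hj
        have hμj : μ j = 0 := by
          apply hμ0
          intro t ht
          rw [Fin.val_succ] at ht
          have hj0 : j ∉ J 0 ∪ J 1 := by
            have := hj 0 hspos
            dsimp only at this
            rwa [if_pos rfl] at this
          rw [Finset.mem_union] at hj0
          push_neg at hj0
          by_cases h2 : (t : ℕ) ≤ 1
          · rcases Nat.lt_or_ge (t : ℕ) 1 with h1 | h1
            · rw [show t = 0 from Fin.ext (by simp only [Fin.val_zero]; omega)]; exact hj0.1
            · rw [show t = 1 from Fin.ext (by rw [hv1]; omega)]; exact hj0.2
          · push_neg at h2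
            have hlt : (t : ℕ) - 1 < ℓ' + 1 := by omega
            have ht' : ((⟨(t : ℕ) - 1, hlt⟩ : Fin (ℓ' + 1)) : ℕ) < (s : ℕ) := by
              simp; omega
            have hne' : (⟨(t : ℕ) - 1, hlt⟩ : Fin (ℓ' + 1)) ≠ 0 := by
              simp [Fin.ext_iff]; omega
            have := hj _ ht'
            dsimp only at this
            rw [if_neg hne'] at this
            have heq : Fin.succ (⟨(t : ℕ) - 1, hlt⟩ : Fin (ℓ' + 1)) = t :=
              Fin.ext (by simp [Fin.val_succ]; omega)
            rwa [heq] at this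
        simp [hμj]
      · intro i
        dsimp only
        rw [if_neg hsne]
        have hBj : ∀ j ∈ J s.succ, (B i j : ℚ) = (c : ℚ) * (A i j : ℚ) := by
          intro j hj
          have : j ∉ J 0 := Finset.disjoint_left.mp (hdisj s.succ 0 (Fin.succ_ne_zero s)) hj
          simp [hB, this]
        calc ∑ j ∈ J s.succ, (B i j : ℚ)
            = ∑ j ∈ J s.succ, (c : ℚ) * (A i j : ℚ) := Finset.sum_congr rfl hBj
          _ = (c : ℚ) * ∑ j ∈ J s.succ, (A i j : ℚ) := (Finset.mul_sum _ _ _).symm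
          _ = (c : ℚ) * ∑ j : Fin k, μ j * (A i j : ℚ) := by rw [hμ i]
          _ = ∑ j : Fin k, (if j ∈ J 0 then (c : ℚ) * μ j / σ j else μ j) * (B i j : ℚ) := by
              rw [Finset.mul_sum]
              refine Finset.sum_congr rfl fun j _ => ?_
              by_cases hj : j ∈ J 0
              · rw [if_pos hj]
                have hBv : (B i j : ℚ) = (σ j : ℚ) * (A i j : ℚ) := by simp [hB, hj]
                have hsj := hσQ j
                rw [hBv]
                field_simp
              · rw [if_neg hj]
                have hBv : (B i j : ℚ) = (c : ℚ) * (A i j : ℚ) := by simp [hB, hj]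
                rw [hBv]
                ring
  · intro y hy a
    funext i
    have hyi : ∑ j, B i j * y j = 0 := congrFun hy i
    show ∑ j, A i j * (if j ∈ J 0 then a + σ j * y j else (c : ℤ) * y j) = 0
    have hterm : ∀ j, A i j * (if j ∈ J 0 then a + σ j * y j else (c : ℤ) * y j)
        = (if j ∈ J 0 then A i j * a else 0) + B i j * y j := by
      intro j
      by_cases hj : j ∈ J 0 <;> simp [hB, hj] <;> ring
    rw [Finset.sum_congr rfl fun j _ => hterm j, Finset.sum_add_distrib,
      Finset.sum_ite_mem, Finset.univ_inter, ← Finset.sum_mul, h0 i, zero_mul, zero_add, hyi]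
end

section
/- Let (F,+,·) be a finite field and V an infinite-dimensional vector space over F. Assuming the IP van der Waerden theorem for abelian groups, every finite coloring of V admits, for every M ∈ ℕ, a monochromatic affine subspace of dimension M, i.e., there exist a ∈ V and linearly independent v₁,...,v_M ∈ V such that {a + b₁v₁ + ... + b_M v_M : b₁,...,b_M ∈ F} is monochromatic. -/
/-- `u : Finset ℕ → G` is an IP sequence if `u (α ∪ β) = u α + u β` whenever `α` and `β`
are disjoint non-empty finite sets. -/
def IsIPSeq {G : Type*} [AddCommGroup G] (u : Finset ℕ → G) : Prop :=
  ∀ α β : Finset ℕ, α.Nonempty → β.Nonempty → Disjoint α β → u (α ∪ β) = u α + u β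

/-- Affine spaces theorem: assuming the IP van der Waerden theorem for abelian groups,
any finite coloring of an infinite-dimensional vector space `V` over a finite field `F`
admits, for every `M`, a monochromatic `M`-dimensional affine subspace. -/
theorem affine_spaces_theorem
    (hIP : ∀ (G : Type) [AddCommGroup G] (r : ℕ) (χ : G → Fin r) (m : ℕ)
      (u : Fin m → (Finset ℕ → G)), (∀ i, IsIPSeq (u i)) →
      ∃ (a : G) (γ : Finset ℕ), γ.Nonempty ∧
        ∃ c : Fin r, χ a = c ∧ ∀ i : Fin m, χ (a + u i γ) = c)
    (F : Type) [Field F] [Fintype F]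
    (V : Type) [AddCommGroup V] [Module F V] (hinf : ¬ Module.Finite F V)
    (r : ℕ) (χ : V → Fin r) (M : ℕ) :
    ∃ (a : V) (v : Fin M → V), LinearIndependent F v ∧
      ∃ c : Fin r, ∀ b : Fin M → F, χ (a + ∑ i : Fin M, b i • v i) = c := by
  classical
  obtain ⟨e, he⟩ : ∃ e : ℕ → V, LinearIndependent F e := by
    have hinfidx : Infinite (Module.Basis.ofVectorSpaceIndex F V) := by
      by_contra h
      have : Finite (Module.Basis.ofVectorSpaceIndex F V) := not_infinite_iff_finite.mp h
      exact hinf (Module.Finite.of_basis (Module.Basis.ofVectorSpace F V))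
    let f := Infinite.natEmbedding (Module.Basis.ofVectorSpaceIndex F V)
    exact ⟨fun n => Module.Basis.ofVectorSpace F V (f n),
      (Module.Basis.ofVectorSpace F V).linearIndependent.comp f f.injective⟩
  set m := Fintype.card (Fin M → F) with hm
  let q : Fin m ≃ (Fin M → F) := (Fintype.equivFin (Fin M → F)).symm
  let u : Fin m → Finset ℕ → V := fun j α => ∑ n ∈ α, ∑ i : Fin M, q j i • e (M * n + i)
  have hu : ∀ j, IsIPSeq (u j) := fun j α β _ _ hd => Finset.sum_union hd
  obtain ⟨a, γ, hγ, c, hca, hc⟩ := hIP V r χ m u hu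
  refine ⟨a, fun i => ∑ n ∈ γ, e (M * n + i), ?_, c, ?_⟩
  · have hg : Function.Injective (fun p : ℕ × Fin M => M * p.1 + (p.2 : ℕ)) := by
      rintro ⟨n₁, i₁⟩ ⟨n₂, i₂⟩ h
      simp only at h
      have hM : 0 < M := i₁.pos
      have hn : n₁ = n₂ := by
        have h' := congrArg (· / M) h
        simpa [Nat.mul_add_div hM, Nat.div_eq_of_lt i₁.isLt, Nat.div_eq_of_lt i₂.isLt] using h'
      subst hn
      have : (i₁ : ℕ) = i₂ := by omega
      simp [Prod.ext_iff, Fin.ext this]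
    have he2 : LinearIndependent F (fun p : ℕ × Fin M => e (M * p.1 + (p.2 : ℕ))) :=
      he.comp _ hg
    rw [Fintype.linearIndependent_iff]
    intro g hg0 i
    obtain ⟨n₀, hn₀⟩ := hγ
    refine linearIndependent_iff'.mp he2 (γ ×ˢ Finset.univ) (fun p => g p.2) ?_ (n₀, i)
      (by simp [hn₀])
    rw [Finset.sum_product, Finset.sum_comm]
    simpa [Finset.smul_sum] using hg0
  · intro b
    have h1 := hc (q.symm b)
    have hEq : u (q.symm b) γ = ∑ i : Fin M, b i • ∑ n ∈ γ, e (M * n + i) := by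
      simp only [u, Equiv.apply_symm_apply, q]
      rw [Finset.sum_comm]
      simp [Finset.smul_sum]
    rw [hEq] at h1
    exact h1
end
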